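/- arXiv:1807.06927 — 5 statements merged into one kernel-verified Lean document; each statement's English description precedes it below -/
import Mathlib

section
/- For every M, L > 0 there exists a Borel probability measure η on ℝ with finite absolute moments of all orders such that the following holds: for every pair of finite Borel measures μ⁺, μ⁻ on ℝ, both supported in [−M, M], with μ⁺(ℝ) − μ⁻(ℝ) = 1 and with (μ⁺ + μ⁻)([b, c]) ≤ L(c − b) for all b ≤ c in [−M, M], one has (μ⁻ ∗ η)(A) ≤ (μ⁺ ∗ η)(A) for every Borel set A ⊆ ℝ. (Equivalently: the signed measure μ = μ⁺ − μ⁻, which lies in the class M_M^L of signed measures supported in [−M,M] whose total variation measure has density bounded by L, becomes a probability measure after convolution with the single measure η.) -/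
open MeasureTheory ProbabilityTheory

/-- All absolute moments of `μ` are finite. -/
def HasAllMoments (μ : Measure ℝ) : Prop := ∀ n : ℕ, Integrable (fun x : ℝ => |x| ^ n) μ

/-!
Take for `η` the Laplace distribution with density proportional to `exp (-ε |x|)`. Translating
this density by `x ∈ [-M, M]` changes it by a factor between `exp (-ε M)` and `exp (ε M)`, so at
every point the density of `μ⁻ ∗ η` is at most `exp (2 ε M) μ⁻(ℝ)` times, and that of `μ⁺ ∗ η`
at least `μ⁺(ℝ) = μ⁻(ℝ) + 1` times, one and the same quantity. Since the density bound forces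
`μ⁻(ℝ) ≤ 2 L M`, choosing `exp (2 ε M) = 1 + 1 / (2 L M)` makes the first at most the second.
-/

open Real Set
open scoped ENNReal

lemma conv_withDensity_eq (μ : Measure ℝ) [SFinite μ] {f : ℝ → ℝ≥0∞} (hf : Measurable f) :
    μ.conv (volume.withDensity f) = volume.withDensity (fun z => ∫⁻ x, f (z - x) ∂μ) := by
  ext s hs
  have hind : Measurable (s.indicator (1 : ℝ → ℝ≥0∞)) := measurable_one.indicator hs
  have htranslate : ∀ x, ∫⁻ y, s.indicator 1 (x + y) ∂volume.withDensity f
      = ∫⁻ z, f (z - x) * s.indicator 1 z := fun x => by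
    rw [lintegral_withDensity_eq_lintegral_mul _ hf (g := fun y => s.indicator 1 (x + y))
        (by fun_prop),
      ← lintegral_add_left_eq_self (fun z => f (z - x) * s.indicator 1 z) x]
    simp
  rw [← lintegral_indicator_one hs, Measure.lintegral_conv hind, withDensity_apply _ hs,
    ← lintegral_indicator hs]
  simp_rw [htranslate]
  rw [lintegral_lintegral_swap (by fun_prop)]
  congr 1 with z
  rw [lintegral_mul_const _ (by fun_prop)]
  by_cases hz : z ∈ s <;> simp [hz]

lemma conv_withDensity_le_of_oscillation_le {f g : ℝ → ℝ≥0∞} (hf : Measurable f) {s : Set ℝ}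
    {K : ℝ≥0∞} (hlow : ∀ z, ∀ x ∈ s, g z ≤ f (z - x)) (hup : ∀ z, ∀ x ∈ s, f (z - x) ≤ K * g z)
    {μp μm : Measure ℝ} [SFinite μp] [SFinite μm] (hμp : μp sᶜ = 0) (hμm : μm sᶜ = 0)
    (hmass : K * μm univ ≤ μp univ) :
    μm.conv (volume.withDensity f) ≤ μp.conv (volume.withDensity f) := by
  rw [conv_withDensity_eq μm hf, conv_withDensity_eq μp hf]
  refine withDensity_mono (Filter.Eventually.of_forall fun z => ?_)
  calc ∫⁻ x, f (z - x) ∂μm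
      ≤ ∫⁻ _, K * g z ∂μm := lintegral_mono_ae ((ae_iff.2 hμm).mono (hup z))
    _ = g z * (K * μm univ) := by rw [lintegral_const]; ring
    _ ≤ g z * μp univ := by gcongr
    _ = ∫⁻ _, g z ∂μp := (lintegral_const _).symm
    _ ≤ ∫⁻ x, f (z - x) ∂μp := lintegral_mono_ae ((ae_iff.2 hμp).mono (hlow z))

lemma integrable_comp_abs_of_integrableOn_Ioi {f : ℝ → ℝ} (hf : IntegrableOn f (Ioi 0)) :
    Integrable (fun x => f |x|) := by
  have hIoi : IntegrableOn (fun x => f |x|) (Ioi 0) :=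
    hf.congr_fun (fun x hx => by rw [abs_of_pos hx]) measurableSet_Ioi
  have hIic : IntegrableOn (fun x => f |x|) (Iic 0) := by
    have hneg : MeasurableEmbedding fun x : ℝ => -x := (Homeomorph.neg ℝ).measurableEmbedding
    rw [← Measure.map_neg_eq_self (volume : Measure ℝ), hneg.integrableOn_map_iff]
    simp_rw [Function.comp_def, abs_neg, neg_preimage, neg_Iic, neg_zero]
    exact (integrableOn_Ici_iff_integrableOn_Ioi).mpr hIoi
  simpa using hIic.union hIoi

lemma integrable_pow_abs_mul_exp_neg_mul_abs {b : ℝ} (hb : 0 < b) (n : ℕ) :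
    Integrable (fun x : ℝ => |x| ^ n * exp (-b * |x|)) := by
  refine integrable_comp_abs_of_integrableOn_Ioi (f := fun x => x ^ n * exp (-b * x)) ?_
  refine (integrableOn_rpow_mul_exp_neg_mul_rpow (s := n) (p := 1)
    (neg_one_lt_zero.trans_le n.cast_nonneg) one_pos hb).congr_fun (fun x _ => ?_) measurableSet_Ioi
  simp [rpow_natCast]

lemma exp_neg_mul_abs_add_le {ε M z x : ℝ} (hε : 0 ≤ ε) (hx : |x| ≤ M) :
    exp (-ε * (|z| + M)) ≤ exp (-ε * |z - x|) := by
  refine exp_le_exp.2 ?_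
  nlinarith [abs_sub z x]

lemma exp_neg_mul_abs_sub_le {ε M z x : ℝ} (hε : 0 ≤ ε) (hx : |x| ≤ M) :
    exp (-ε * |z - x|) ≤ exp (2 * ε * M) * exp (-ε * (|z| + M)) := by
  rw [← exp_add]
  refine exp_le_exp.2 ?_
  have hz := abs_sub_abs_le_abs_sub z (z - x)
  rw [sub_sub_cancel] at hz
  nlinarith

noncomputable def expNegAbs (ε x : ℝ) : ℝ≥0∞ := ENNReal.ofReal (exp (-ε * |x|))

lemma measurable_expNegAbs (ε : ℝ) : Measurable (expNegAbs ε) := by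
  unfold expNegAbs; fun_prop

noncomputable def laplaceMeasure (ε : ℝ) : Measure ℝ :=
  (volume.withDensity (expNegAbs ε) univ)⁻¹ • volume.withDensity (expNegAbs ε)

lemma isFiniteMeasure_withDensity_expNegAbs {ε : ℝ} (hε : 0 < ε) :
    IsFiniteMeasure (volume.withDensity (expNegAbs ε)) :=
  isFiniteMeasure_withDensity_ofReal
    (by simpa using (integrable_pow_abs_mul_exp_neg_mul_abs hε 0).hasFiniteIntegral)

lemma withDensity_expNegAbs_ne_zero (ε : ℝ) : volume.withDensity (expNegAbs ε) ≠ 0 := by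
  rw [Ne, withDensity_eq_zero_iff (measurable_expNegAbs ε).aemeasurable]
  intro h
  obtain ⟨x, hx⟩ := h.exists
  simp only [expNegAbs, Pi.zero_apply, ENNReal.ofReal_eq_zero] at hx
  exact hx.not_gt (exp_pos _)

lemma isProbabilityMeasure_laplaceMeasure {ε : ℝ} (hε : 0 < ε) :
    IsProbabilityMeasure (laplaceMeasure ε) :=
  have := isFiniteMeasure_withDensity_expNegAbs hε
  have : NeZero (volume.withDensity (expNegAbs ε)) := ⟨withDensity_expNegAbs_ne_zero ε⟩
  isProbabilityMeasureSMul

lemma hasAllMoments_laplaceMeasure {ε : ℝ} (hε : 0 < ε) : HasAllMoments (laplaceMeasure ε) := by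
  intro n
  refine Integrable.smul_measure ?_ (ENNReal.inv_ne_top.2 ?_)
  · rw [integrable_withDensity_iff (measurable_expNegAbs ε)
      (.of_forall fun _ => ENNReal.ofReal_lt_top)]
    simpa [expNegAbs, (exp_pos _).le] using integrable_pow_abs_mul_exp_neg_mul_abs hε n
  · exact Measure.measure_univ_ne_zero.2 (withDensity_expNegAbs_ne_zero ε)

lemma conv_laplaceMeasure_le {ε M : ℝ} (hε : 0 ≤ ε) {μp μm : Measure ℝ} [SFinite μp] [SFinite μm]
    (hμp : μp (Icc (-M) M)ᶜ = 0) (hμm : μm (Icc (-M) M)ᶜ = 0)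
    (hmass : ENNReal.ofReal (exp (2 * ε * M)) * μm univ ≤ μp univ) :
    μm.conv (laplaceMeasure ε) ≤ μp.conv (laplaceMeasure ε) := by
  rw [laplaceMeasure, Measure.conv_smul_right, Measure.conv_smul_right]
  gcongr
  refine conv_withDensity_le_of_oscillation_le (measurable_expNegAbs ε)
    (g := fun z => ENNReal.ofReal (exp (-ε * (|z| + M)))) (fun z x hx => ?_) (fun z x hx => ?_)
    hμp hμm hmass
  · exact ENNReal.ofReal_le_ofReal (exp_neg_mul_abs_add_le hε (abs_le.2 hx))
  · rw [← ENNReal.ofReal_mul (exp_pos _).le]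
    exact ENNReal.ofReal_le_ofReal (exp_neg_mul_abs_sub_le hε (abs_le.2 hx))

theorem stmt_12 (M L : ℝ) (hM : 0 < M) (hL : 0 < L) :
    ∃ η : Measure ℝ, IsProbabilityMeasure η ∧ HasAllMoments η ∧
      ∀ μp μm : Measure ℝ, IsFiniteMeasure μp → IsFiniteMeasure μm →
        -- both parts are supported in [-M, M]
        μp (Set.Icc (-M) M)ᶜ = 0 → μm (Set.Icc (-M) M)ᶜ = 0 →
        -- total mass of the signed measure μp - μm is 1
        μp Set.univ = μm Set.univ + 1 →
        -- the total variation measure has density bounded by L on [-M, M]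
        (∀ b c : ℝ, -M ≤ b → b ≤ c → c ≤ M →
          (μp + μm) (Set.Icc b c) ≤ ENNReal.ofReal (L * (c - b))) →
        -- μp - μm becomes a (positive) probability measure after convolution with η
        μm.conv η ≤ μp.conv η := by
  have hLM : 0 < 2 * L * M := by positivity
  set ε := log (1 + (2 * L * M)⁻¹) / (2 * M)
  have hε : 0 < ε := div_pos (log_pos (lt_add_of_pos_right 1 (inv_pos.2 hLM))) (by positivity)
  have hexp : exp (2 * ε * M) = 1 + (2 * L * M)⁻¹ := by
    rw [show 2 * ε * M = ε * (2 * M) by ring, div_mul_cancel₀ _ (by positivity)]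
    exact exp_log (by positivity)
  refine ⟨laplaceMeasure ε, isProbabilityMeasure_laplaceMeasure hε,
    hasAllMoments_laplaceMeasure hε, ?_⟩
  intro μp μm _ _ hμp hμm hmass hdensity
  refine conv_laplaceMeasure_le hε.le hμp hμm ?_
  have hμm_le : μm univ ≤ ENNReal.ofReal (2 * L * M) := calc
    μm univ = μm (Icc (-M) M) := (measure_congr (ae_eq_univ.2 hμm)).symm
    _ ≤ (μp + μm) (Icc (-M) M) := le_add_self
    _ ≤ ENNReal.ofReal (L * (M - -M)) := hdensity _ _ le_rfl (by linarith) le_rfl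
    _ = ENNReal.ofReal (2 * L * M) := by ring_nf
  calc ENNReal.ofReal (exp (2 * ε * M)) * μm univ
      = μm univ + μm univ / ENNReal.ofReal (2 * L * M) := by
        rw [hexp, ENNReal.ofReal_add zero_le_one (by positivity), ENNReal.ofReal_one,
          ENNReal.ofReal_inv_of_pos hLM, add_mul, one_mul, div_eq_mul_inv, mul_comm]
    _ ≤ μm univ + 1 := by
        gcongr
        exact ENNReal.div_le_of_le_mul (by simpa using hμm_le)
    _ = μp univ := hmass.symm
end

section
/- Let μ and ν be compactly supported Borel probability measures on ℝ such that sup(supp μ) < sup(supp ν). Then for every Borel probability measure η on ℝ satisfying ∫ e^{tx} dη(x) < ∞ for all t > 0, it is not the case that μ ∗ η ≥₁ ν ∗ η. In particular, if the top of the support of X lies strictly below that of Y, no independent background risk with everywhere-finite moment generating function can make X + Z first-order stochastically dominate Y + Z. -/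
open MeasureTheory ProbabilityTheory

/-- `μ` first-order stochastically dominates `ν`: the CDF of `μ` lies below that of `ν`. -/
def FSD (μ ν : Measure ℝ) : Prop := ∀ t : ℝ, cdf μ t ≤ cdf ν t

/-- The (topological) support of a measure on `ℝ`: points all of whose neighborhoods have
positive measure. -/
def msupport (μ : Measure ℝ) : Set ℝ := {x | ∀ U ∈ nhds x, μ U ≠ 0}

/-!
If `μ ∗ η ≥₁ ν ∗ η`, then the `ℝ≥0∞`-valued moment generating functions satisfy
`M_ν(t) M_η(t) ≤ M_μ(t) M_η(t)` for `t > 0`, and since `M_η(t)` is finite and positive it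
cancels. But with `b = sup supp μ < a < sup supp ν` we have `M_μ(t) ≤ e^{tb}` while
`M_ν(t) ≥ ν(a, ∞) e^{ta}` with `ν(a, ∞) > 0`, which is impossible for large `t`.
-/

open Set
open scoped ENNReal

/-- Taken `ℝ≥0∞`-valued so that it is defined, and multiplicative under convolution, without
integrability assumptions. -/
noncomputable def emgf (ρ : Measure ℝ) (t : ℝ) : ℝ≥0∞ :=
  ∫⁻ x, ENNReal.ofReal (Real.exp (t * x)) ∂ρ

lemma msupport_compl_null (μ : Measure ℝ) : μ (msupport μ)ᶜ = 0 := by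
  refine measure_null_of_locally_null _ fun x hx => ?_
  simp only [msupport, mem_compl_iff, mem_ofPred_eq, not_forall, not_not] at hx
  obtain ⟨U, hU, hU0⟩ := hx
  exact ⟨U, nhdsWithin_le_nhds hU, hU0⟩

lemma msupport_nonempty (μ : Measure ℝ) [NeZero μ] : (msupport μ).Nonempty := by
  rw [nonempty_iff_ne_empty]
  intro h
  exact NeZero.ne μ (by simpa [h] using msupport_compl_null μ)

lemma ae_le_sSup_msupport {μ : Measure ℝ} (h : BddAbove (msupport μ)) :
    ∀ᵐ x ∂μ, x ≤ sSup (msupport μ) :=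
  measure_mono_null (fun _ hx hxs => hx (le_csSup h hxs)) (msupport_compl_null μ)

lemma measure_Ioi_ne_zero_of_lt_sSup_msupport {ν : Measure ℝ} [NeZero ν] {a : ℝ}
    (ha : a < sSup (msupport ν)) : ν (Ioi a) ≠ 0 := by
  obtain ⟨x, hx, hax⟩ := exists_lt_of_lt_csSup (msupport_nonempty ν) ha
  exact hx _ (Ioi_mem_nhds hax)

lemma emgf_conv (ρ σ : Measure ℝ) [SFinite ρ] [SFinite σ] (t : ℝ) :
    emgf (ρ.conv σ) t = emgf ρ t * emgf σ t := by
  have hexp (p : ℝ × ℝ) : ENNReal.ofReal (Real.exp (t * (p.1 + p.2)))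
      = ENNReal.ofReal (Real.exp (t * p.1)) * ENNReal.ofReal (Real.exp (t * p.2)) := by
    rw [← ENNReal.ofReal_mul (Real.exp_pos _).le, ← Real.exp_add, mul_add]
  rw [emgf, Measure.conv, lintegral_map (by fun_prop) (by fun_prop)]
  simp_rw [hexp]
  exact lintegral_prod_mul (f := fun x => ENNReal.ofReal (Real.exp (t * x)))
    (g := fun x => ENNReal.ofReal (Real.exp (t * x))) (by fun_prop) (by fun_prop)

lemma emgf_ne_zero (ρ : Measure ℝ) [NeZero ρ] (t : ℝ) : emgf ρ t ≠ 0 := by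
  rw [emgf, Ne, lintegral_eq_zero_iff (by fun_prop)]
  intro h
  have := ae_neBot.2 (NeZero.ne ρ)
  obtain ⟨x, hx⟩ := h.exists
  exact (ENNReal.ofReal_pos.2 (Real.exp_pos _)).ne' hx

lemma emgf_le_of_ae_le {μ : Measure ℝ} [IsProbabilityMeasure μ] {b t : ℝ} (ht : 0 ≤ t)
    (hb : ∀ᵐ x ∂μ, x ≤ b) : emgf μ t ≤ ENNReal.ofReal (Real.exp (t * b)) := by
  calc emgf μ t ≤ ∫⁻ _, ENNReal.ofReal (Real.exp (t * b)) ∂μ := by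
        refine lintegral_mono_ae (hb.mono fun x hx => ?_)
        gcongr
    _ = ENNReal.ofReal (Real.exp (t * b)) := by simp

lemma measure_Ioi_mul_le_emgf (ν : Measure ℝ) {a t : ℝ} (ht : 0 ≤ t) :
    ν (Ioi a) * ENNReal.ofReal (Real.exp (t * a)) ≤ emgf ν t := by
  rw [mul_comm, ← lintegral_indicator_const measurableSet_Ioi]
  refine lintegral_mono fun x => ?_
  by_cases hx : x ∈ Ioi a
  · rw [indicator_of_mem hx]
    gcongr
    exact hx.le
  · simp [indicator_of_notMem hx]

namespace FSD

variable {μ ν : Measure ℝ} [IsProbabilityMeasure μ] [IsProbabilityMeasure ν]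

lemma measure_Ioi_le (h : FSD μ ν) (x : ℝ) : ν (Ioi x) ≤ μ (Ioi x) := by
  have hIic : μ (Iic x) ≤ ν (Iic x) := by
    rw [← ofReal_cdf, ← ofReal_cdf]
    exact ENNReal.ofReal_le_ofReal (h x)
  rw [← compl_Iic, prob_compl_eq_one_sub measurableSet_Iic,
    prob_compl_eq_one_sub measurableSet_Iic]
  exact tsub_le_tsub_left hIic 1

lemma emgf_le (h : FSD μ ν) {t : ℝ} (ht : 0 < t) : emgf ν t ≤ emgf μ t := by
  have hlayer (ρ : Measure ℝ) :
      emgf ρ t = ∫⁻ s in Ioi (0 : ℝ), ρ {y | s < Real.exp (t * y)} :=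
    lintegral_eq_lintegral_meas_lt ρ (.of_forall fun _ => (Real.exp_pos _).le)
      (by fun_prop)
  rw [hlayer, hlayer]
  refine setLIntegral_mono' measurableSet_Ioi fun s (hs : 0 < s) => ?_
  have hset : {y | s < Real.exp (t * y)} = Ioi (Real.log s / t) := by
    ext y
    rw [mem_ofPred_eq, mem_Ioi, div_lt_iff₀ ht, ← Real.log_lt_iff_lt_exp hs, mul_comm]
  rw [hset]
  exact h.measure_Ioi_le _

lemma emgf_le_of_conv {η : Measure ℝ} [IsProbabilityMeasure η]
    (h : FSD (μ.conv η) (ν.conv η)) {t : ℝ} (ht : 0 < t)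
    (hη : Integrable (fun x => Real.exp (t * x)) η) :
    emgf ν t ≤ emgf μ t := by
  have hconv := h.emgf_le ht
  rw [emgf_conv, emgf_conv] at hconv
  exact (ENNReal.mul_le_mul_iff_left (emgf_ne_zero η t) hη.lintegral_lt_top.ne).1 hconv

end FSD

lemma not_forall_mul_exp_le {q a b : ℝ} (hq : 0 < q) (hba : b < a) :
    ¬ ∀ t, 0 < t → q * Real.exp (t * a) ≤ Real.exp (t * b) := by
  intro h
  -- `e^{t(a-b)} ≥ 1 + t(a-b)`, and this `t` makes `q (1 + t(a-b)) = q + 1 > 1`.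
  set t := 1 / (q * (a - b))
  have ht : 0 < t := by have := sub_pos.2 hba; positivity
  have hqt : q * (t * (a - b)) = 1 := by
    simp only [t]; field_simp [(sub_pos.2 hba).ne']
  have hexp : Real.exp (t * b) * (1 + t * (a - b)) ≤ Real.exp (t * a) := by
    calc Real.exp (t * b) * (1 + t * (a - b)) ≤ Real.exp (t * b) * Real.exp (t * (a - b)) := by
          gcongr; linarith [Real.add_one_le_exp (t * (a - b))]
      _ = Real.exp (t * a) := by rw [← Real.exp_add]; ring_nf
  have hle : Real.exp (t * b) * (q * (1 + t * (a - b))) ≤ Real.exp (t * b) * 1 := by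
    nlinarith [h t ht]
  have := le_of_mul_le_mul_left hle (Real.exp_pos _)
  linarith

theorem stmt_14_general (μ ν : Measure ℝ) [IsProbabilityMeasure μ] [IsProbabilityMeasure ν]
    (hμc : IsCompact (msupport μ))
    (hsup : sSup (msupport μ) < sSup (msupport ν))
    (η : Measure ℝ) [IsProbabilityMeasure η]
    (hmgf : ∀ t : ℝ, 0 < t → Integrable (fun x : ℝ => Real.exp (t * x)) η) :
    ¬ FSD (μ.conv η) (ν.conv η) := by
  intro hFSD
  obtain ⟨a, hba, ha⟩ := exists_between hsup
  have hν := measure_Ioi_ne_zero_of_lt_sSup_msupport ha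
  have hμ := ae_le_sSup_msupport hμc.bddAbove
  refine not_forall_mul_exp_le (ENNReal.toReal_pos hν (measure_ne_top ν _)) hba fun t ht => ?_
  rw [← ENNReal.ofReal_le_ofReal_iff (Real.exp_pos _).le,
    ENNReal.ofReal_mul ENNReal.toReal_nonneg, ENNReal.ofReal_toReal (measure_ne_top ν _)]
  calc ν (Ioi a) * ENNReal.ofReal (Real.exp (t * a))
    _ ≤ emgf ν t := measure_Ioi_mul_le_emgf ν ht.le
    _ ≤ emgf μ t := hFSD.emgf_le_of_conv ht (hmgf t ht)
    _ ≤ ENNReal.ofReal (Real.exp (t * sSup (msupport μ))) := emgf_le_of_ae_le ht.le hμ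

theorem stmt_14 (μ ν : Measure ℝ) [IsProbabilityMeasure μ] [IsProbabilityMeasure ν]
    (hμc : IsCompact (msupport μ)) (hνc : IsCompact (msupport ν))
    (hsup : sSup (msupport μ) < sSup (msupport ν))
    (η : Measure ℝ) [IsProbabilityMeasure η]
    (hmgf : ∀ t : ℝ, 0 < t → Integrable (fun x : ℝ => Real.exp (t * x)) η) :
    ¬ FSD (μ.conv η) (ν.conv η) :=
  stmt_14_general μ ν hμc hsup η hmgf
end

section
/- Let k ≥ 0 be an integer and let μ, ν be Borel probability measures on ℝ with finite (k+2)-th absolute moments and equal means, ∫x dμ(x) = ∫x dν(x). Then, with F_μ, F_ν the CDFs of μ, ν, the limit as n → ∞ of ∫_{−n}^{n} t^k (∫_{−∞}^{t} (F_ν(u) − F_μ(u)) du) dt exists and equals (1/((k+1)(k+2)))·(∫u^{k+2} dν(u) − ∫u^{k+2} dμ(u)). -/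
/-!
Write `h_n(x) = ∫_{-n}^{n} t^k (t - x)⁺ dt`. Since `∫_{-∞}^{t} F_ρ = E_ρ[(t - X)⁺]`, Fubini turns
the integral over `[-n, n]` into `E_ν[h_n] - E_μ[h_n]`. For `|x| ≤ n`, `h_n(x)` is an affine
function of `x` plus `x^{k+2} / ((k+1)(k+2))`; the affine part has the same expectation under `μ`
and `ν` because their means agree, and what remains is dominated by `6 |x|^{k+2}` uniformly in `n`,
so dominated convergence gives the limit.
-/

open MeasureTheory ProbabilityTheory Filter Set
open scoped Topology Interval

lemma integrable_id_of_integrable_abs_pow {ρ : Measure ℝ} [IsFiniteMeasure ρ] {m : ℕ} (hm : m ≠ 0)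
    (h : Integrable (fun x : ℝ => |x| ^ m) ρ) : Integrable (fun x : ℝ => x) ρ := by
  refine ((integrable_const 1).add h).mono' measurable_id.aestronglyMeasurable
    (.of_forall fun x => ?_)
  rw [Real.norm_eq_abs, Pi.add_apply]
  rcases le_total |x| 1 with hx | hx
  · linarith [pow_nonneg (abs_nonneg x) m]
  · linarith [le_self_pow₀ hx hm]

lemma lintegral_Iic_cdf (ρ : Measure ℝ) [IsProbabilityMeasure ρ] (t : ℝ) :
    ∫⁻ u in Iic t, ENNReal.ofReal (cdf ρ u) = ∫⁻ x, ENNReal.ofReal (max (t - x) 0) ∂ρ := by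
  have hS : MeasurableSet {p : ℝ × ℝ | p.2 ≤ p.1} := measurableSet_le measurable_snd measurable_fst
  calc ∫⁻ u in Iic t, ENNReal.ofReal (cdf ρ u)
      = ∫⁻ u in Iic t, ρ (Prod.mk u ⁻¹' {p : ℝ × ℝ | p.2 ≤ p.1}) := by
        refine lintegral_congr fun u => ?_
        rw [cdf_eq_real, measureReal_def, ENNReal.ofReal_toReal (measure_ne_top ρ _)]
        rfl
    _ = ∫⁻ x, (volume.restrict (Iic t)) ((fun u => (u, x)) ⁻¹' {p : ℝ × ℝ | p.2 ≤ p.1}) ∂ρ := by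
        rw [← Measure.prod_apply hS, Measure.prod_apply_symm hS]
    _ = ∫⁻ x, ENNReal.ofReal (max (t - x) 0) ∂ρ := by
        refine lintegral_congr fun x => ?_
        rw [Measure.restrict_apply' measurableSet_Iic]
        change volume (Ici x ∩ Iic t) = _
        simp [Ici_inter_Iic]

lemma integrableOn_Iic_cdf (ρ : Measure ℝ) [IsProbabilityMeasure ρ]
    (hρ : Integrable (fun x : ℝ => x) ρ) (t : ℝ) : IntegrableOn (cdf ρ) (Iic t) := by
  refine ⟨(monotone_cdf ρ).measurable.aestronglyMeasurable, ?_⟩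
  rw [hasFiniteIntegral_iff_ofReal (.of_forall fun u => cdf_nonneg ρ u), lintegral_Iic_cdf]
  exact (hasFiniteIntegral_iff_ofReal (.of_forall fun x => le_max_right _ _)).1
    ((integrable_const t).sub hρ).pos_part.hasFiniteIntegral

lemma setIntegral_Iic_cdf (ρ : Measure ℝ) [IsProbabilityMeasure ρ]
    (hρ : Integrable (fun x : ℝ => x) ρ) (t : ℝ) :
    ∫ u in Iic t, cdf ρ u = ∫ x, max (t - x) 0 ∂ρ := by
  have hmax : Integrable (fun x => max (t - x) 0) ρ := ((integrable_const t).sub hρ).pos_part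
  rw [← ENNReal.ofReal_eq_ofReal_iff (setIntegral_nonneg measurableSet_Iic fun u _ => cdf_nonneg ρ u)
      (integral_nonneg (f := fun x => max (t - x) 0) fun x => le_max_right _ _),
    ofReal_integral_eq_lintegral_ofReal (integrableOn_Iic_cdf ρ hρ t)
      (.of_forall fun u => cdf_nonneg ρ u),
    ofReal_integral_eq_lintegral_ofReal hmax (.of_forall fun x => le_max_right _ _),
    lintegral_Iic_cdf]

noncomputable def hingeKernel (k : ℕ) (n x : ℝ) : ℝ := ∫ t in (-n)..n, t ^ k * max (t - x) 0

noncomputable def hingeAffine (k : ℕ) (n x : ℝ) : ℝ :=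
  n ^ (k + 2) / (k + 2) - n ^ (k + 1) / (k + 1) * x

@[fun_prop]
lemma continuous_hingeKernel (k : ℕ) (n : ℝ) : Continuous (hingeKernel k n) :=
  intervalIntegral.continuous_parametric_intervalIntegral_of_continuous' (by fun_prop) _ _

@[fun_prop]
lemma continuous_hingeAffine (k : ℕ) (n : ℝ) : Continuous (hingeAffine k n) := by
  unfold hingeAffine; fun_prop

lemma hingeKernel_of_abs_le (k : ℕ) {n x : ℝ} (hx : |x| ≤ n) :
    hingeKernel k n x = hingeAffine k n x + x ^ (k + 2) / ((k + 1) * (k + 2)) := by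
  obtain ⟨hnx, hxn⟩ := abs_le.1 hx
  have hleft : ∫ t in (-n)..x, t ^ k * max (t - x) 0 = 0 := by
    refine (intervalIntegral.integral_congr fun t ht => ?_).trans intervalIntegral.integral_zero
    rw [uIcc_of_le hnx] at ht
    simp [max_eq_right (sub_nonpos.2 ht.2)]
  have hright : ∫ t in x..n, t ^ k * max (t - x) 0 = ∫ t in x..n, (t ^ (k + 1) - x * t ^ k) := by
    refine intervalIntegral.integral_congr fun t ht => ?_
    rw [uIcc_of_le hxn] at ht
    simp only [max_eq_left (sub_nonneg.2 ht.1)]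
    ring
  rw [hingeKernel, ← intervalIntegral.integral_add_adjacent_intervals (b := x)
    ((by fun_prop : Continuous _).intervalIntegrable _ _)
    ((by fun_prop : Continuous _).intervalIntegrable _ _), hleft, hright,
    intervalIntegral.integral_sub ((by fun_prop : Continuous _).intervalIntegrable _ _)
      ((by fun_prop : Continuous _).intervalIntegrable _ _),
    intervalIntegral.integral_const_mul, integral_pow, integral_pow, hingeAffine]
  push_cast
  field_simp
  ring

lemma abs_hingeKernel_le {k : ℕ} {n x : ℝ} (hn : 0 ≤ n) (hx : n ≤ |x|) :
    |hingeKernel k n x| ≤ 4 * |x| ^ (k + 2) := by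
  have hbound : ∀ t ∈ Ι (-n) n, ‖t ^ k * max (t - x) 0‖ ≤ 2 * |x| ^ (k + 1) := by
    intro t ht
    rw [uIoc_of_le (by linarith)] at ht
    have ht' : |t| ≤ |x| := (abs_le.2 ⟨ht.1.le, ht.2⟩).trans hx
    have hmax : max (t - x) 0 ≤ 2 * |x| :=
      max_le (by linarith [le_abs_self t, neg_abs_le x]) (by positivity)
    rw [norm_mul, norm_pow, Real.norm_eq_abs, Real.norm_eq_abs,
      abs_of_nonneg (le_max_right (t - x) 0)]
    calc |t| ^ k * max (t - x) 0 ≤ |x| ^ k * (2 * |x|) := by gcongr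
      _ = 2 * |x| ^ (k + 1) := by ring
  calc |hingeKernel k n x| ≤ 2 * |x| ^ (k + 1) * |n - -n| :=
        intervalIntegral.norm_integral_le_of_norm_le_const hbound
    _ ≤ 2 * |x| ^ (k + 1) * (2 * |x|) := by
        gcongr
        rw [abs_of_nonneg (by linarith)]
        linarith
    _ = 4 * |x| ^ (k + 2) := by ring

lemma abs_hingeAffine_le {k : ℕ} {n x : ℝ} (hn : 0 ≤ n) (hx : n ≤ |x|) :
    |hingeAffine k n x| ≤ 2 * |x| ^ (k + 2) := by
  have hk (m : ℕ) : n ^ (m + 1) / (m + 1) ≤ |x| ^ (m + 1) :=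
    (div_le_self (by positivity) (by simp)).trans (pow_le_pow_left₀ hn hx _)
  calc |hingeAffine k n x| ≤ |n ^ (k + 2) / (k + 2)| + |n ^ (k + 1) / (k + 1) * x| := abs_sub _ _
    _ = n ^ (k + 2) / (k + 2) + n ^ (k + 1) / (k + 1) * |x| := by
        rw [abs_mul, abs_of_nonneg (by positivity), abs_of_nonneg (by positivity)]
    _ ≤ |x| ^ (k + 2) + |x| ^ (k + 1) * |x| := by
        gcongr
        · exact_mod_cast hk (k + 1)
        · exact hk k
    _ = 2 * |x| ^ (k + 2) := by ring

lemma abs_hingeKernel_sub_hingeAffine_le (k : ℕ) {n : ℝ} (hn : 0 ≤ n) (x : ℝ) :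
    |hingeKernel k n x - hingeAffine k n x| ≤ 6 * |x| ^ (k + 2) := by
  rcases le_total |x| n with hx | hx
  · have hk : (1 : ℝ) ≤ (k + 1) * (k + 2) := by nlinarith [k.cast_nonneg (α := ℝ)]
    rw [hingeKernel_of_abs_le k hx, add_sub_cancel_left, abs_div, abs_pow,
      abs_of_pos (zero_lt_one.trans_le hk)]
    linarith [div_le_self (pow_nonneg (abs_nonneg x) (k + 2)) hk, pow_nonneg (abs_nonneg x) (k + 2)]
  · calc _ ≤ |hingeKernel k n x| + |hingeAffine k n x| := abs_sub _ _
      _ ≤ 4 * |x| ^ (k + 2) + 2 * |x| ^ (k + 2) :=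
          add_le_add (abs_hingeKernel_le hn hx) (abs_hingeAffine_le hn hx)
      _ = 6 * |x| ^ (k + 2) := by ring

lemma integrable_prod_mul_hinge {ρ : Measure ℝ} [IsFiniteMeasure ρ]
    (hρ : Integrable (fun x : ℝ => x) ρ) (k : ℕ) (a b : ℝ) :
    Integrable (Function.uncurry fun t x : ℝ => t ^ k * max (t - x) 0)
      ((volume.restrict (Ioc a b)).prod ρ) := by
  have hdom : Integrable (fun p : ℝ × ℝ => |p.1| ^ (k + 1) + |p.1| ^ k * |p.2|)
      ((volume.restrict (Ioc a b)).prod ρ) :=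
    ((continuous_abs.pow (k + 1)).integrableOn_Ioc.comp_fst ρ).add
      ((Continuous.integrableOn_Ioc (f := fun t : ℝ => |t| ^ k) (by fun_prop)).mul_prod hρ.abs)
  refine hdom.mono' (Continuous.aestronglyMeasurable (by fun_prop)) (.of_forall fun p => ?_)
  have hmax : max (p.1 - p.2) 0 ≤ |p.1| + |p.2| :=
    max_le (by linarith [le_abs_self p.1, neg_abs_le p.2]) (by positivity)
  rw [Function.uncurry_apply_pair, norm_mul, norm_pow, Real.norm_eq_abs, Real.norm_eq_abs,
    abs_of_nonneg (le_max_right (p.1 - p.2) 0)]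
  calc |p.1| ^ k * max (p.1 - p.2) 0 ≤ |p.1| ^ k * (|p.1| + |p.2|) := by gcongr
    _ = |p.1| ^ (k + 1) + |p.1| ^ k * |p.2| := by ring

lemma intervalIntegrable_mul_integral_hinge {ρ : Measure ℝ} [IsFiniteMeasure ρ]
    (hρ : Integrable (fun x : ℝ => x) ρ) (k : ℕ) {a b : ℝ} (hab : a ≤ b) :
    IntervalIntegrable (fun t => t ^ k * ∫ x, max (t - x) 0 ∂ρ) volume a b := by
  rw [intervalIntegrable_iff_integrableOn_Ioc_of_le hab]
  simpa only [IntegrableOn, Function.uncurry_apply_pair, integral_const_mul] using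
    (integrable_prod_mul_hinge hρ k a b).integral_prod_left

lemma intervalIntegral_mul_integral_hinge_swap {ρ : Measure ℝ} [IsFiniteMeasure ρ]
    (hρ : Integrable (fun x : ℝ => x) ρ) (k : ℕ) {a b : ℝ} (hab : a ≤ b) :
    ∫ t in a..b, t ^ k * ∫ x, max (t - x) 0 ∂ρ = ∫ x, (∫ t in a..b, t ^ k * max (t - x) 0) ∂ρ := by
  simp only [intervalIntegral.integral_of_le hab, ← integral_const_mul]
  exact integral_integral_swap (integrable_prod_mul_hinge hρ k a b)

lemma integrable_hingeKernel_sub_hingeAffine {ρ : Measure ℝ} {k : ℕ}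
    (hρ : Integrable (fun x : ℝ => |x| ^ (k + 2)) ρ) {n : ℝ} (hn : 0 ≤ n) :
    Integrable (fun x => hingeKernel k n x - hingeAffine k n x) ρ :=
  (hρ.const_mul 6).mono' (by fun_prop)
    (.of_forall fun x => abs_hingeKernel_sub_hingeAffine_le k hn x)

lemma tendsto_integral_hingeKernel_sub_hingeAffine {ρ : Measure ℝ} {k : ℕ}
    (hρ : Integrable (fun x : ℝ => |x| ^ (k + 2)) ρ) :
    Tendsto (fun n => ∫ x, (hingeKernel k n x - hingeAffine k n x) ∂ρ) atTop
      (𝓝 ((∫ x, x ^ (k + 2) ∂ρ) / ((k + 1) * (k + 2)))) := by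
  rw [← integral_div]
  refine tendsto_integral_filter_of_dominated_convergence _
    (.of_forall fun n => ?_) ?_ (hρ.const_mul 6) (.of_forall fun x => ?_)
  · fun_prop
  · filter_upwards [eventually_ge_atTop 0] with n hn
    exact .of_forall (abs_hingeKernel_sub_hingeAffine_le k hn)
  · refine tendsto_const_nhds.congr' ?_
    filter_upwards [eventually_ge_atTop |x|] with n hn
    rw [hingeKernel_of_abs_le k hn, add_sub_cancel_left]

lemma integral_hingeAffine {ρ : Measure ℝ} [IsProbabilityMeasure ρ]
    (hρ : Integrable (fun x : ℝ => x) ρ) (k : ℕ) (n : ℝ) :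
    ∫ x, hingeAffine k n x ∂ρ = hingeAffine k n (∫ x, x ∂ρ) := by
  simp only [hingeAffine]
  rw [integral_sub (integrable_const _) (hρ.const_mul _), integral_const, integral_const_mul]
  simp

lemma intervalIntegral_mul_integral_hinge {ρ : Measure ℝ} [IsProbabilityMeasure ρ] {k : ℕ}
    (hρ : Integrable (fun x : ℝ => |x| ^ (k + 2)) ρ) {n : ℝ} (hn : 0 ≤ n) :
    ∫ t in (-n)..n, t ^ k * ∫ x, max (t - x) 0 ∂ρ
      = ∫ x, (hingeKernel k n x - hingeAffine k n x) ∂ρ + hingeAffine k n (∫ x, x ∂ρ) := by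
  have hρ1 := integrable_id_of_integrable_abs_pow (by omega) hρ
  have hL : Integrable (hingeAffine k n) ρ := (integrable_const _).sub (hρ1.const_mul _)
  rw [intervalIntegral_mul_integral_hinge_swap hρ1 k (by linarith), ← integral_hingeAffine hρ1,
    ← integral_add (integrable_hingeKernel_sub_hingeAffine hρ hn) hL]
  simp only [sub_add_cancel, hingeKernel]

theorem stmt_16 (k : ℕ) (μ ν : Measure ℝ) [IsProbabilityMeasure μ] [IsProbabilityMeasure ν]
    (hμ : Integrable (fun x : ℝ => |x| ^ (k + 2)) μ)
    (hν : Integrable (fun x : ℝ => |x| ^ (k + 2)) ν)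
    (hmean : (∫ x, x ∂μ) = ∫ x, x ∂ν) :
    Tendsto
      (fun n : ℝ => ∫ t in (-n)..n, t ^ k * ∫ u in Set.Iic t, (cdf ν u - cdf μ u))
      atTop
      (nhds ((1 / (((k : ℝ) + 1) * ((k : ℝ) + 2))) *
        ((∫ u, u ^ (k + 2) ∂ν) - ∫ u, u ^ (k + 2) ∂μ))) := by
  have hμ1 := integrable_id_of_integrable_abs_pow (by omega) hμ
  have hν1 := integrable_id_of_integrable_abs_pow (by omega) hν
  have hG (t : ℝ) : t ^ k * ∫ u in Iic t, (cdf ν u - cdf μ u)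
      = t ^ k * ∫ x, max (t - x) 0 ∂ν - t ^ k * ∫ x, max (t - x) 0 ∂μ := by
    rw [integral_sub (integrableOn_Iic_cdf ν hν1 t) (integrableOn_Iic_cdf μ hμ1 t),
      setIntegral_Iic_cdf ν hν1, setIntegral_Iic_cdf μ hμ1, mul_sub]
  rw [one_div_mul_eq_div, sub_div]
  refine ((tendsto_integral_hingeKernel_sub_hingeAffine hν).sub
    (tendsto_integral_hingeKernel_sub_hingeAffine hμ)).congr' ?_
  filter_upwards [eventually_ge_atTop 0] with n hn
  rw [funext hG, intervalIntegral.integral_sub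
      (intervalIntegrable_mul_integral_hinge hν1 k (by linarith))
      (intervalIntegrable_mul_integral_hinge hμ1 k (by linarith)),
    intervalIntegral_mul_integral_hinge hν hn, intervalIntegral_mul_integral_hinge hμ hn, hmean]
  ring
end

section
/- For every y ∈ ℝ and a > 0, the total variation norm of the difference between the Gaussian measure with mean y and variance a² and the Gaussian measure with mean 0 and variance a² is at most |y|/a; that is, |N(y, a²) − N(0, a²)|(ℝ) ≤ |y|/a, where |σ| denotes the total variation measure of the signed measure σ. -/
/-!
For measures of equal mass, the total variation of `μ - ν` is `2 * (μ A - ν A)` for a Hahn set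
`A`, so it suffices to bound `μ A - ν A` uniformly. The densities of `N(m + d, v)` and `N(m, v)`
cross only at the midpoint `m + d / 2`, so `μ A - ν A` is largest on the half-line beyond it;
by translation this maximum is the `N(m, v)`-mass of an interval of length `d`, at most
`d / √(2πv)`. This gives `2|y| / (√(2π) a) ≤ |y| / a`, slightly better than Pinsker's bound.
-/

open MeasureTheory ProbabilityTheory Set Real

open scoped ENNReal NNReal

theorem setIntegral_le_setIntegral_of_nonneg_of_nonpos_compl {X : Type*} [MeasurableSpace X]
    {μ : Measure X} {f : X → ℝ} (hf : Integrable f μ) {s A : Set X} (hs : MeasurableSet s)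
    (hA : MeasurableSet A) (hpos : ∀ x ∈ A, 0 ≤ f x) (hneg : ∀ x ∉ A, f x ≤ 0) :
    ∫ x in s, f x ∂μ ≤ ∫ x in A, f x ∂μ := by
  rw [← integral_indicator hs, ← integral_indicator hA]
  refine integral_mono (hf.indicator hs) (hf.indicator hA) fun x ↦ ?_
  by_cases hxA : x ∈ A <;> by_cases hxs : x ∈ s <;> simp [hxA, hxs, hpos, hneg]

namespace MeasureTheory.SignedMeasure

theorem totalVariation_univ_le_of_apply_le {X : Type*} [MeasurableSpace X] {s : SignedMeasure X}
    (h_univ : s univ = 0) {C : ℝ} (hC : ∀ j, MeasurableSet j → s j ≤ C) :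
    s.totalVariation univ ≤ ENNReal.ofReal (2 * C) := by
  obtain ⟨i, hi, hpos, hneg, hposPart, hnegPart⟩ := s.toJordanDecomposition_spec
  have h_compl : s iᶜ = -s i := by
    have := s.of_union disjoint_compl_right hi hi.compl
    rw [union_compl_self, h_univ] at this
    linarith
  have h_tv : s.totalVariation univ = ENNReal.ofReal (2 * s i) := by
    rw [totalVariation, Measure.add_apply, hposPart, hnegPart,
      toMeasureOfZeroLE_apply _ hpos hi MeasurableSet.univ,
      toMeasureOfLEZero_apply _ hneg hi.compl MeasurableSet.univ]
    simp only [inter_univ, h_compl, neg_neg]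
    have h_nonneg : 0 ≤ s i := VectorMeasure.nonneg_of_zero_le_restrict s hpos
    rw [two_mul, ENNReal.ofReal_add h_nonneg h_nonneg, ENNReal.ofReal_eq_coe_nnreal h_nonneg]
  rw [h_tv]
  exact ENNReal.ofReal_le_ofReal (by linarith [hC i hi])

end MeasureTheory.SignedMeasure

theorem MeasureTheory.Measure.totalVariation_toSignedMeasure_sub_le {X : Type*}
    [MeasurableSpace X] {μ ν : Measure X} [IsFiniteMeasure μ] [IsFiniteMeasure ν]
    (h_univ : μ univ = ν univ) {C : ℝ} (hC : ∀ j, MeasurableSet j → μ.real j - ν.real j ≤ C) :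
    (μ.toSignedMeasure - ν.toSignedMeasure).totalVariation univ ≤ ENNReal.ofReal (2 * C) :=
  SignedMeasure.totalVariation_univ_le_of_apply_le
    (by rw [toSignedMeasure_sub_apply .univ, measureReal_def, h_univ, measureReal_def, sub_self])
    fun j hj ↦ (toSignedMeasure_sub_apply hj).trans_le (hC j hj)

namespace ProbabilityTheory

variable {v : ℝ≥0}

lemma gaussianPDFReal_le_inv_sqrt (μ : ℝ) (v : ℝ≥0) (x : ℝ) :
    gaussianPDFReal μ v x ≤ (√(2 * π * v))⁻¹ := by
  rw [gaussianPDFReal]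
  refine mul_le_of_le_one_right (by positivity) (exp_le_one_iff.2 ?_)
  exact div_nonpos_of_nonpos_of_nonneg (neg_nonpos.2 (sq_nonneg _)) (by positivity)

lemma gaussianPDFReal_le_gaussianPDFReal_of_sq_le {μ μ' x : ℝ} (h : (x - μ') ^ 2 ≤ (x - μ) ^ 2) :
    gaussianPDFReal μ v x ≤ gaussianPDFReal μ' v x :=
  mul_le_mul_of_nonneg_left
    (exp_le_exp.2 (div_le_div_of_nonneg_right (neg_le_neg h) (by positivity))) (by positivity)

lemma measureReal_gaussianReal (μ : ℝ) (hv : v ≠ 0) (s : Set ℝ) :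
    (gaussianReal μ v).real s = ∫ x in s, gaussianPDFReal μ v x := by
  rw [measureReal_def, gaussianReal_apply_eq_integral μ hv,
    ENNReal.toReal_ofReal (integral_nonneg fun x ↦ gaussianPDFReal_nonneg μ v x)]

lemma gaussianReal_le_mul_volume (μ : ℝ) (hv : v ≠ 0) (s : Set ℝ) :
    gaussianReal μ v s ≤ ENNReal.ofReal (√(2 * π * v))⁻¹ * volume s := by
  rw [gaussianReal_apply μ hv, ← setLIntegral_const]
  exact lintegral_mono fun x ↦ ENNReal.ofReal_le_ofReal (gaussianPDFReal_le_inv_sqrt μ v x)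

lemma gaussianReal_add_apply (μ y : ℝ) {s : Set ℝ} (hs : MeasurableSet s) :
    gaussianReal (μ + y) v s = gaussianReal μ v ((· + y) ⁻¹' s) := by
  rw [← gaussianReal_map_add_const, Measure.map_apply (measurable_add_const y) hs]

lemma measureReal_gaussianReal_add_sub_le (hv : v ≠ 0) {m d : ℝ} (hd : 0 ≤ d) {s : Set ℝ}
    (hs : MeasurableSet s) :
    (gaussianReal (m + d) v).real s - (gaussianReal m v).real s ≤ d / √(2 * π * v) := by
  set c := m + d / 2 with hc
  have h_diff : ∀ t, (gaussianReal (m + d) v).real t - (gaussianReal m v).real t =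
      ∫ x in t, (gaussianPDFReal (m + d) v x - gaussianPDFReal m v x) := fun t ↦ by
    rw [measureReal_gaussianReal _ hv, measureReal_gaussianReal _ hv,
      integral_sub (integrable_gaussianPDFReal _ _).integrableOn
        (integrable_gaussianPDFReal _ _).integrableOn]
  have h_Ioi : (gaussianReal (m + d) v).real (Ioi c) - (gaussianReal m v).real (Ioi c) =
      (gaussianReal m v).real (Ioc (c - d) c) := by
    rw [measureReal_def, gaussianReal_add_apply m d measurableSet_Ioi, preimage_add_const_Ioi,
      ← Ioc_union_Ioi_eq_Ioi (by linarith : c - d ≤ c),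
      measure_union (Ioc_disjoint_Ioi le_rfl) measurableSet_Ioi,
      ENNReal.toReal_add (measure_ne_top _ _) (measure_ne_top _ _)]
    simp only [measureReal_def]
    ring
  have h_Ioc : gaussianReal m v (Ioc (c - d) c) ≤ ENNReal.ofReal (d / √(2 * π * v)) := by
    calc gaussianReal m v (Ioc (c - d) c)
        ≤ ENNReal.ofReal (√(2 * π * v))⁻¹ * ENNReal.ofReal d := by
          simpa [Real.volume_Ioc] using gaussianReal_le_mul_volume m hv (Ioc (c - d) c)
      _ = ENNReal.ofReal (d / √(2 * π * v)) := by
          rw [← ENNReal.ofReal_mul (by positivity), inv_mul_eq_div]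
  calc (gaussianReal (m + d) v).real s - (gaussianReal m v).real s
      ≤ (gaussianReal (m + d) v).real (Ioi c) - (gaussianReal m v).real (Ioi c) := by
        rw [h_diff, h_diff]
        refine setIntegral_le_setIntegral_of_nonneg_of_nonpos_compl
          ((integrable_gaussianPDFReal _ _).sub (integrable_gaussianPDFReal _ _)) hs
          measurableSet_Ioi (fun x hx ↦ ?_) (fun x hx ↦ ?_)
        · refine sub_nonneg.2 (gaussianPDFReal_le_gaussianPDFReal_of_sq_le ?_)
          nlinarith [mul_nonneg hd (sub_nonneg.2 (le_of_lt (mem_Ioi.1 hx)))]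
        · refine sub_nonpos.2 (gaussianPDFReal_le_gaussianPDFReal_of_sq_le ?_)
          nlinarith [mul_nonneg hd (sub_nonneg.2 (not_lt.1 (mem_Ioi.not.1 hx)))]
    _ = (gaussianReal m v).real (Ioc (c - d) c) := h_Ioi
    _ ≤ d / √(2 * π * v) := by
        rw [measureReal_def]
        exact ENNReal.toReal_le_of_le_ofReal (by positivity) h_Ioc

theorem totalVariation_gaussianReal_sub_le (hv : v ≠ 0) (m₁ m₂ : ℝ) :
    ((gaussianReal m₁ v).toSignedMeasure - (gaussianReal m₂ v).toSignedMeasure).totalVariation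
      univ ≤ ENNReal.ofReal (2 * |m₁ - m₂| / √(2 * π * v)) := by
  wlog h : m₂ ≤ m₁ generalizing m₁ m₂
  · rw [← SignedMeasure.totalVariation_neg, neg_sub, abs_sub_comm]
    exact this m₂ m₁ (by linarith)
  obtain ⟨d, hd, rfl⟩ : ∃ d, 0 ≤ d ∧ m₁ = m₂ + d := ⟨m₁ - m₂, by linarith, by ring⟩
  rw [add_sub_cancel_left, abs_of_nonneg hd, mul_div_assoc]
  exact Measure.totalVariation_toSignedMeasure_sub_le (by simp only [measure_univ])
    fun s hs ↦ measureReal_gaussianReal_add_sub_le hv hd hs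

end ProbabilityTheory

theorem stmt_17 (y a : ℝ) (ha : 0 < a) :
    ((gaussianReal y (a ^ 2).toNNReal).toSignedMeasure -
        (gaussianReal 0 (a ^ 2).toNNReal).toSignedMeasure).totalVariation Set.univ ≤
      ENNReal.ofReal (|y| / a) := by
  have hv : (a ^ 2).toNNReal ≠ 0 := (Real.toNNReal_pos.2 (by positivity)).ne'
  have h_sqrt : 2 * a ≤ √(2 * π * (a ^ 2).toNNReal) := by
    rw [Real.coe_toNNReal _ (sq_nonneg a)]
    exact Real.le_sqrt_of_sq_le (by nlinarith [Real.pi_gt_three])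
  refine (totalVariation_gaussianReal_sub_le hv y 0).trans (ENNReal.ofReal_le_ofReal ?_)
  calc 2 * |y - 0| / √(2 * π * (a ^ 2).toNNReal) ≤ 2 * |y| / (2 * a) := by
        rw [sub_zero]
        exact div_le_div_of_nonneg_left (by positivity) (by positivity) h_sqrt
    _ = |y| / a := by field_simp
end

section
/- Let 0 < l < g and a > 0, and let φ_a and Φ_a denote respectively the probability density function and the cumulative distribution function of the Gaussian measure with mean 0 and variance a². Define t(s) = (1/(g − l))·(2Φ_a(s) − Φ_a(s − g) − Φ_a(s + l)) − φ_a(s). Then t(s) ≥ 0 for every s > g, and t(s) ≤ 0 for every s < −l. -/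
open MeasureTheory ProbabilityTheory Set
open scoped NNReal

/-! The three increments of `Φ` in `t` are integrals of `φ` over `[s - g, s]` and
`[s, s + l]`. For `s > g` both intervals lie to the right of the mode, where `φ` is
decreasing, so `∫_{s-g}^s φ ≥ g φ(s)` and `∫_s^{s+l} φ ≤ l φ(s)`; subtracting gives
`(g - l) t(s) ≥ 0`.
For `s < -l` both lie to the left of the mode and all inequalities reverse. -/

lemma gaussianPDFReal_antitoneOn (μ : ℝ) (v : ℝ≥0) :
    AntitoneOn (gaussianPDFReal μ v) (Ici μ) := by
  intro x hx y hy hxy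
  have hsq : (x - μ) ^ 2 ≤ (y - μ) ^ 2 := by
    gcongr
    exact sub_nonneg.2 hx
  simp only [gaussianPDFReal]
  gcongr

lemma gaussianPDFReal_monotoneOn (μ : ℝ) (v : ℝ≥0) :
    MonotoneOn (gaussianPDFReal μ v) (Iic μ) := by
  intro x hx y hy hxy
  have hsq : (y - μ) ^ 2 ≤ (x - μ) ^ 2 := by nlinarith [mem_Iic.1 hy]
  simp only [gaussianPDFReal]
  gcongr

lemma cdf_gaussianReal_sub_cdf (μ : ℝ) {v : ℝ≥0} (hv : v ≠ 0) (c b : ℝ) :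
    cdf (gaussianReal μ v) b - cdf (gaussianReal μ v) c =
      ∫ x in c..b, gaussianPDFReal μ v x := by
  have hcdf (x : ℝ) : cdf (gaussianReal μ v) x = ∫ y in Iic x, gaussianPDFReal μ v y := by
    rw [cdf_eq_real, measureReal_def, gaussianReal_apply_eq_integral μ hv, ENNReal.toReal_ofReal]
    exact setIntegral_nonneg measurableSet_Iic fun y _ ↦ gaussianPDFReal_nonneg μ v y
  rw [hcdf, hcdf, intervalIntegral.integral_Iic_sub_Iic
    (integrable_gaussianPDFReal μ v).integrableOn (integrable_gaussianPDFReal μ v).integrableOn]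

namespace AntitoneOn

variable {f : ℝ → ℝ} {a b : ℝ}

lemma mul_le_intervalIntegral (hab : a ≤ b) (hf : AntitoneOn f (Icc a b)) :
    (b - a) * f b ≤ ∫ x in a..b, f x := by
  have hf' : AntitoneOn f (uIcc a b) := by rwa [uIcc_of_le hab]
  simpa using intervalIntegral.integral_mono_on (μ := volume) hab intervalIntegrable_const
    hf'.intervalIntegrable fun x hx ↦ hf hx (right_mem_Icc.2 hab) hx.2

lemma intervalIntegral_le_mul (hab : a ≤ b) (hf : AntitoneOn f (Icc a b)) :
    ∫ x in a..b, f x ≤ (b - a) * f a := by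
  have hf' : AntitoneOn f (uIcc a b) := by rwa [uIcc_of_le hab]
  simpa using intervalIntegral.integral_mono_on (μ := volume) hab hf'.intervalIntegrable
    intervalIntegrable_const fun x hx ↦ hf (left_mem_Icc.2 hab) hx hx.1

lemma sub_mul_le_intervalIntegral_sub {s g l : ℝ} (hl : 0 ≤ l) (hg : 0 ≤ g)
    (hf : AntitoneOn f (Icc (s - g) (s + l))) :
    (g - l) * f s ≤ (∫ x in (s - g)..s, f x) - ∫ x in s..(s + l), f x := by
  have hleft := (hf.mono (Icc_subset_Icc_right (by linarith))).mul_le_intervalIntegral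
    (by linarith : s - g ≤ s)
  have hright := (hf.mono (Icc_subset_Icc_left (by linarith))).intervalIntegral_le_mul
    (by linarith : s ≤ s + l)
  simp only [sub_sub_cancel, add_sub_cancel_left] at hleft hright
  linarith

end AntitoneOn

lemma MonotoneOn.intervalIntegral_sub_le_sub_mul {f : ℝ → ℝ} {s g l : ℝ} (hl : 0 ≤ l)
    (hg : 0 ≤ g) (hf : MonotoneOn f (Icc (s - g) (s + l))) :
    (∫ x in (s - g)..s, f x) - (∫ x in s..(s + l), f x) ≤ (g - l) * f s := by
  have := hf.neg.sub_mul_le_intervalIntegral_sub hl hg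
  simp only [intervalIntegral.integral_neg] at this
  linarith

theorem stmt_19 (l g a : ℝ) (hl : 0 < l) (hlg : l < g) (ha : 0 < a) :
    -- φ is the density and Φ the CDF of the Gaussian with mean 0 and variance a²
    let φ : ℝ → ℝ := gaussianPDFReal 0 (a ^ 2).toNNReal
    let Φ : ℝ → ℝ := fun s => cdf (gaussianReal 0 (a ^ 2).toNNReal) s
    let t : ℝ → ℝ := fun s => (1 / (g - l)) * (2 * Φ s - Φ (s - g) - Φ (s + l)) - φ s
    (∀ s : ℝ, g < s → 0 ≤ t s) ∧ (∀ s : ℝ, s < -l → t s ≤ 0) := by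
  intro φ Φ t
  have hv : (a ^ 2).toNNReal ≠ 0 := by simpa using ha.ne'
  have hgl : 0 < g - l := by linarith
  have ht (s : ℝ) :
      t s = ((∫ x in (s - g)..s, φ x) - ∫ x in s..(s + l), φ x) / (g - l) - φ s := by
    simp only [t, Φ, φ, ← cdf_gaussianReal_sub_cdf 0 hv]
    ring
  constructor
  · intro s hs
    have hanti : AntitoneOn φ (Icc (s - g) (s + l)) :=
      (gaussianPDFReal_antitoneOn 0 _).mono fun x hx ↦ mem_Ici.2 (by linarith [hx.1])
    have := hanti.sub_mul_le_intervalIntegral_sub hl.le (by linarith)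
    rw [ht, sub_nonneg, le_div_iff₀ hgl]
    linarith
  · intro s hs
    have hmono : MonotoneOn φ (Icc (s - g) (s + l)) :=
      (gaussianPDFReal_monotoneOn 0 _).mono fun x hx ↦ mem_Iic.2 (by linarith [hx.2])
    have := hmono.intervalIntegral_sub_le_sub_mul hl.le (by linarith)
    rw [ht, sub_nonpos, div_le_iff₀ hgl]
    linarith
end
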